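/- Let T ∈ L(H,K) and S a closed subspace of H, and set A = T*T. Then the spline set spl(T,S,y) = {x ∈ y + S : ‖Tx‖ ≤ ‖T(y+s)‖ for all s ∈ S} is nonempty for every y ∈ H if and only if the pair (A, S) is compatible. -/

import Mathlib

/-!
Let `N = {x | T x ⊥ T S}`, which is `A⁻¹(Sᗮ)`. Since a vector minimizes a norm over a coset of a
subspace exactly when it is orthogonal to that subspace, `x` is a spline for `y` iff
`x ∈ (y + S) ∩ N`; hence splines exist for every `y` iff `S + N = H`. For an idempotent `Q` with
range `S`, the identity `AQ = Q*A` says that `⟪T Q x, T y⟫` is symmetric in `x, y`, which holds iff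
`ker Q ⊆ N`. Conversely, if `S + N = H` then `N ⊓ (S ⊓ N)ᗮ` is a closed complement of `S` inside
`N`, and the projection onto `S` along it is bounded.
-/

open ContinuousLinearMap

theorem Submodule.forall_norm_le_norm_add_iff_mem_orthogonal {𝕜 E : Type*} [RCLike 𝕜]
    [NormedAddCommGroup E] [InnerProductSpace 𝕜 E] (V : Submodule 𝕜 E) (u : E) :
    (∀ v ∈ V, ‖u‖ ≤ ‖u + v‖) ↔ u ∈ Vᗮ := by
  have hbdd : BddBelow (Set.range fun w : V ↦ ‖u - w‖) := ⟨0, by rintro _ ⟨w, rfl⟩; positivity⟩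
  have hmin := V.norm_eq_iInf_iff_inner_eq_zero (u := u) V.zero_mem
  simp only [sub_zero] at hmin
  rw [V.mem_orthogonal', ← hmin]
  constructor
  · intro h
    refine le_antisymm (le_ciInf fun w ↦ ?_) ?_
    · simpa [sub_eq_add_neg] using h (-w) (V.neg_mem w.2)
    · simpa using ciInf_le hbdd 0
  · intro h v hv
    simpa [sub_eq_add_neg] using h.trans_le (ciInf_le hbdd ⟨-v, V.neg_mem hv⟩)

section Spline

variable {𝕜 H K : Type*} [RCLike 𝕜]
  [NormedAddCommGroup H] [InnerProductSpace 𝕜 H] [NormedAddCommGroup K] [InnerProductSpace 𝕜 K]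

namespace Submodule

/-- The paper's `A⁻¹(Sᗮ)` for `A = T†T`, written through `T` so that no completeness is needed. -/
def orthogonalWith (S : Submodule 𝕜 H) (T : H →L[𝕜] K) : Submodule 𝕜 H :=
  (S.map (T : H →ₗ[𝕜] K))ᗮ.comap (T : H →ₗ[𝕜] K)

theorem mem_orthogonalWith_iff {S : Submodule 𝕜 H} {T : H →L[𝕜] K} {x : H} :
    x ∈ S.orthogonalWith T ↔ ∀ s ∈ S, inner 𝕜 (T s) (T x) = 0 := by
  simp [orthogonalWith, mem_orthogonal]

theorem isClosed_orthogonalWith (S : Submodule 𝕜 H) (T : H →L[𝕜] K) :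
    IsClosed (S.orthogonalWith T : Set H) :=
  (S.map (T : H →ₗ[𝕜] K)).isClosed_orthogonal.preimage T.continuous

theorem forall_norm_le_norm_add_iff_mem_orthogonalWith (S : Submodule 𝕜 H) (T : H →L[𝕜] K)
    (x : H) : (∀ s ∈ S, ‖T x‖ ≤ ‖T (x + s)‖) ↔ x ∈ S.orthogonalWith T := by
  simp [orthogonalWith, ← forall_norm_le_norm_add_iff_mem_orthogonal]

end Submodule

def spline (T : H →L[𝕜] K) (S : Submodule 𝕜 H) (y : H) : Set H :=
  {x | (∃ s ∈ S, x = y + s) ∧ ∀ s ∈ S, ‖T x‖ ≤ ‖T (y + s)‖}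

theorem mem_spline_iff (T : H →L[𝕜] K) (S : Submodule 𝕜 H) (y x : H) :
    x ∈ spline T S y ↔ x - y ∈ S ∧ x ∈ S.orthogonalWith T := by
  rw [← S.forall_norm_le_norm_add_iff_mem_orthogonalWith]
  constructor
  · rintro ⟨⟨s₀, hs₀, rfl⟩, hmin⟩
    refine ⟨by simpa using hs₀, fun s hs ↦ ?_⟩
    simpa [add_assoc] using hmin (s₀ + s) (S.add_mem hs₀ hs)
  · rintro ⟨hxy, hmin⟩
    refine ⟨⟨x - y, hxy, by abel⟩, fun s hs ↦ ?_⟩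
    have hys : y + s = x + (s - (x - y)) := by abel
    simpa only [hys] using hmin (s - (x - y)) (S.sub_mem hs hxy)

theorem spline_nonempty_iff (T : H →L[𝕜] K) (S : Submodule 𝕜 H) (y : H) :
    (spline T S y).Nonempty ↔ y ∈ S ⊔ S.orthogonalWith T := by
  simp only [Set.Nonempty, mem_spline_iff, Submodule.mem_sup]
  constructor
  · rintro ⟨x, hxy, hx⟩
    exact ⟨y - x, by simpa using S.neg_mem hxy, x, hx, sub_add_cancel y x⟩
  · rintro ⟨s, hs, x, hx, rfl⟩
    exact ⟨x, by simpa using S.neg_mem hs, hx⟩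

end Spline

theorem Submodule.exists_isTopCompl_le_of_sup_eq_top {𝕜 H : Type*} [RCLike 𝕜]
    [NormedAddCommGroup H] [InnerProductSpace 𝕜 H] [CompleteSpace H] {S N : Submodule 𝕜 H}
    (hS : IsClosed (S : Set H)) (hN : IsClosed (N : Set H)) (hSN : S ⊔ N = ⊤) :
    ∃ N' ≤ N, S.IsTopCompl N' := by
  have : CompleteSpace (S ⊓ N : Submodule 𝕜 H) := (hS.inter hN).completeSpace_coe
  refine ⟨(S ⊓ N)ᗮ ⊓ N, inf_le_right, IsCompl.isTopCompl_of_isClosed ⟨?_, ?_⟩ hS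
    ((S ⊓ N).isClosed_orthogonal.inter hN)⟩
  · rw [disjoint_iff, ← (S ⊓ N).inf_orthogonal_eq_bot]
    ac_rfl
  · rw [codisjoint_iff, ← hSN]
    calc S ⊔ (S ⊓ N)ᗮ ⊓ N = S ⊔ (S ⊓ N) ⊔ (S ⊓ N)ᗮ ⊓ N := by rw [sup_inf_self]
      _ = S ⊔ N := by
        rw [sup_assoc, sup_orthogonal_inf_of_hasOrthogonalProjection inf_le_right]

theorem Submodule.exists_isIdempotentElem_range_eq_of_sup_eq_top {𝕜 H : Type*} [RCLike 𝕜]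
    [NormedAddCommGroup H] [InnerProductSpace 𝕜 H] [CompleteSpace H] {S N : Submodule 𝕜 H}
    (hS : IsClosed (S : Set H)) (hN : IsClosed (N : Set H)) (hSN : S ⊔ N = ⊤) :
    ∃ Q : H →L[𝕜] H, IsIdempotentElem Q ∧ LinearMap.range (Q : H →ₗ[𝕜] H) = S ∧
      ∀ x, x - Q x ∈ N := by
  obtain ⟨N', hN'N, h⟩ := exists_isTopCompl_le_of_sup_eq_top hS hN hSN
  refine ⟨S.projectionL N' h, isIdempotentElem_projectionL h, range_projectionL h, fun x ↦ ?_⟩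
  rw [← projectionL_eq_self_sub_projectionL]
  exact hN'N (projectionL_apply_mem _ x)

theorem adjoint_comp_self_comp_eq_iff_sub_mem_orthogonalWith {𝕜 H K : Type*} [RCLike 𝕜]
    [NormedAddCommGroup H] [InnerProductSpace 𝕜 H] [CompleteSpace H]
    [NormedAddCommGroup K] [InnerProductSpace 𝕜 K] [CompleteSpace K] (T : H →L[𝕜] K)
    {S : Submodule 𝕜 H} {Q : H →L[𝕜] H} (hQ : IsIdempotentElem Q)
    (hQS : LinearMap.range (Q : H →ₗ[𝕜] H) = S) :
    (adjoint T ∘L T) ∘L Q = adjoint Q ∘L (adjoint T ∘L T) ↔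
      ∀ x, x - Q x ∈ S.orthogonalWith T := by
  have hQmem (x : H) : Q x ∈ S := by
    rw [← hQS]
    exact LinearMap.mem_range_self (Q : H →ₗ[𝕜] H) x
  simp_rw [Submodule.mem_orthogonalWith_iff]
  constructor
  · intro hcompat x s hs
    obtain ⟨u, rfl⟩ : ∃ u, Q u = s := by rwa [← hQS] at hs
    calc inner 𝕜 (T (Q u)) (T (x - Q x))
        = inner 𝕜 (((adjoint T ∘L T) ∘L Q) u) (x - Q x) := by
          simp only [comp_apply, adjoint_inner_left]
      _ = inner 𝕜 ((adjoint T ∘L T) u) (Q (x - Q x)) := by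
          rw [hcompat]; simp only [comp_apply, adjoint_inner_left]
      _ = 0 := by
          rw [map_sub, show Q (Q x) = Q x from DFunLike.congr_fun hQ.eq x, sub_self,
            inner_zero_right]
  · intro hker
    -- both sides equal ⟪T (Q x), T (Q y)⟫ as sesquilinear forms in x, y
    have hQ_left (x y : H) : inner 𝕜 (T (Q x)) (T y) = inner 𝕜 (T (Q x)) (T (Q y)) := by
      rw [← sub_eq_zero, ← inner_sub_right, ← map_sub, hker y _ (hQmem x)]
    have hQ_right (x y : H) : inner 𝕜 (T x) (T (Q y)) = inner 𝕜 (T (Q x)) (T (Q y)) := by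
      rw [← sub_eq_zero, ← inner_sub_left, ← map_sub, inner_eq_zero_symm.1 (hker x _ (hQmem y))]
    ext1 x
    refine ext_inner_right 𝕜 fun y ↦ ?_
    simp only [comp_apply, adjoint_inner_left]
    rw [hQ_left, hQ_right x y]

theorem stmt_12
    {H K : Type*}
    [NormedAddCommGroup H] [InnerProductSpace ℂ H] [CompleteSpace H]
    [NormedAddCommGroup K] [InnerProductSpace ℂ K] [CompleteSpace K]
    (T : H →L[ℂ] K) (S : Submodule ℂ H) (hS : IsClosed (S : Set H)) :
    (∀ y : H,
      {x : H | (∃ s ∈ S, x = y + s) ∧ ∀ s ∈ S, ‖T x‖ ≤ ‖T (y + s)‖}.Nonempty) ↔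
    (∃ Q : H →L[ℂ] H, Q ∘L Q = Q ∧ LinearMap.range (Q : H →ₗ[ℂ] H) = S ∧
      (adjoint T ∘L T) ∘L Q = adjoint Q ∘L (adjoint T ∘L T)) := by
  have hsplines : (∀ y, (spline T S y).Nonempty) ↔ S ⊔ S.orthogonalWith T = ⊤ := by
    simp only [spline_nonempty_iff, Submodule.eq_top_iff']
  refine hsplines.trans ⟨fun hsup ↦ ?_, fun ⟨Q, hQ, hQS, hcompat⟩ ↦ ?_⟩
  · obtain ⟨Q, hQ, hQS, hker⟩ := Submodule.exists_isIdempotentElem_range_eq_of_sup_eq_top hS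
      (S.isClosed_orthogonalWith T) hsup
    exact ⟨Q, hQ, hQS, (adjoint_comp_self_comp_eq_iff_sub_mem_orthogonalWith T hQ hQS).2 hker⟩
  · have hker := (adjoint_comp_self_comp_eq_iff_sub_mem_orthogonalWith T hQ hQS).1 hcompat
    refine Submodule.eq_top_iff'.2 fun x ↦ Submodule.mem_sup.2 ⟨Q x, ?_, x - Q x, hker x, ?_⟩
    · rw [← hQS]
      exact LinearMap.mem_range_self (Q : H →ₗ[ℂ] H) x
    · exact add_sub_cancel (Q x) x
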